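/- Let k ≥ 1, let a, b ∈ {1, 2, ..., 2k+1} with a odd and b even, and let H_1, H_2, ..., H_{2k+1} be graphs each with n vertices. If the generalized lexicographic product P_{2k+1}[H_1, H_2, ..., H_{2k+1}] contains a Hamiltonian path starting in a vertex of the copy of H_a and ending in a vertex of the copy of H_b, then the sum over i = 0, ..., k of π(H_{2i+1}) is at least n. -/

import Mathlib

open SimpleGraph Finset

/-- The generalized lexicographic product `G[H₁,…,Hₘ]` of a graph `G` on vertices
`u_1, …, u_m` (indexed by `Fin m`, so `u_i` corresponds to index `i-1`) and graphs
`H 0, …, H (m-1)`, each on `n` vertices: each vertex `i` of `G` is replaced by a copy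
of `H i`, and all edges are added between the copies of `H i` and `H j` whenever
`i` and `j` are adjacent in `G`. -/
def genLexProd {m n : ℕ} (G : SimpleGraph (Fin m)) (H : Fin m → SimpleGraph (Fin n)) :
    SimpleGraph (Fin m × Fin n) where
  Adj p q := G.Adj p.1 q.1 ∨ (p.1 = q.1 ∧ (H p.1).Adj p.2 q.2)
  symm := ⟨by
    rintro p q (h | ⟨h1, h2⟩)
    · exact Or.inl h.symm
    · exact Or.inr ⟨h1.symm, by rw [← h1]; exact h2.symm⟩⟩
  loopless := ⟨by
    rintro p (h | ⟨-, h2⟩)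
    · exact G.loopless.irrefl _ h
    · exact (H p.1).loopless.irrefl _ h2⟩

/-- The lexicographic product `G[H]`. -/
def lexProd {α β : Type*} (G : SimpleGraph α) (H : SimpleGraph β) :
    SimpleGraph (α × β) where
  Adj p q := G.Adj p.1 q.1 ∨ (p.1 = q.1 ∧ H.Adj p.2 q.2)
  symm := ⟨by
    rintro p q (h | ⟨h1, h2⟩)
    · exact Or.inl h.symm
    · exact Or.inr ⟨h1.symm, h2.symm⟩⟩
  loopless := ⟨by
    rintro p (h | ⟨-, h2⟩)
    · exact G.loopless.irrefl _ h
    · exact H.loopless.irrefl _ h2⟩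

/-- A linear forest: an acyclic graph in which every vertex has degree at most `2`,
i.e. a forest all of whose components are paths. -/
def SimpleGraph.IsLinearForest {V : Type*} (F : SimpleGraph V) : Prop :=
  F.IsAcyclic ∧ ∀ v : V, (F.neighborSet v).ncard ≤ 2

/-- `piLF H` is `π(H)`: the maximum number of edges of a spanning linear forest of `H`.
(A spanning subgraph of `H` is a graph on the same vertex set all of whose edges are
edges of `H`, i.e. a graph `F ≤ H`.) -/
noncomputable def piLF {V : Type*} (H : SimpleGraph V) : ℕ :=
  sSup {m : ℕ | ∃ F : SimpleGraph V, F ≤ H ∧ F.IsLinearForest ∧ F.edgeSet.ncard = m}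

/-- A graph is traceable if it contains a hamiltonian path. -/
def SimpleGraph.IsTraceable {V : Type*} [DecidableEq V] (G : SimpleGraph V) : Prop :=
  ∃ (u v : V) (p : G.Walk u v), p.IsHamiltonian

/-- A graph is hamiltonian connected if any two distinct vertices are joined by a
hamiltonian path. -/
def SimpleGraph.IsHamiltonianConnected {V : Type*} [DecidableEq V] (G : SimpleGraph V) : Prop :=
  ∀ u v : V, u ≠ v → ∃ p : G.Walk u v, p.IsHamiltonian

/-! The copies of `H_1, H_3, …, H_{2k+1}` form a set `A` of `(k+1)n` vertices, against `kn`
outside. Since the hamiltonian path ends outside `A`, every vertex of `A` has a successor on the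
path, and distinct vertices have distinct successors; at most `kn` of these lie outside `A`, so at
least `n` steps of the path join two vertices of `A`. The odd-indexed vertices of `P_{2k+1}` are
pairwise nonadjacent, so each such step is an edge inside a single copy of some `H_{2i+1}`, and
the path's edges inside that copy form a linear forest of `H_{2i+1}`: there are at most
`π(H_{2i+1})` of them. -/

namespace SimpleGraph

lemma pathGraph_walk_mem_edges_of_le_of_le {m : ℕ} {a b : Fin m} (hab : a.val + 1 = b.val) :
    ∀ {u v : Fin m} (w : (pathGraph m).Walk u v), u ≤ a → b ≤ v → s(a, b) ∈ w.edges
  | _, _, .nil, hu, hv => absurd (hu.trans_lt (Fin.lt_def.mpr (by omega))) (not_lt.mpr hv)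
  | u, _, .cons (v := w) h q, hu, hv => by
    rw [Walk.edges_cons, List.mem_cons]
    by_cases hw : w ≤ a
    · exact .inr (pathGraph_walk_mem_edges_of_le_of_le hab q hw hv)
    · rw [pathGraph_adj] at h
      left
      rw [Sym2.eq_iff]
      left
      constructor <;> ext <;> simp only [Fin.le_def, not_le] at hu hw <;> omega

lemma isAcyclic_pathGraph (m : ℕ) : (pathGraph m).IsAcyclic := by
  rw [isAcyclic_iff_forall_adj_isBridge]
  intro u v huv
  rw [isBridge_iff_forall_walk_mem_edges]
  intro w
  rcases pathGraph_adj.mp huv with h | h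
  · exact pathGraph_walk_mem_edges_of_le_of_le h w le_rfl le_rfl
  · simpa [Sym2.eq_swap] using pathGraph_walk_mem_edges_of_le_of_le h w.reverse le_rfl le_rfl

lemma ncard_neighborSet_pathGraph_le_two {m : ℕ} (v : Fin m) :
    ((pathGraph m).neighborSet v).ncard ≤ 2 := by
  have hsub :
      ∀ w ∈ (pathGraph m).neighborSet v, w.val ∈ ({v.val - 1, v.val + 1} : Set ℕ) := by
    intro w hw
    rcases pathGraph_adj.mp hw with h | h <;> simp only [Set.mem_insert_iff,
      Set.mem_singleton_iff] <;> omega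
  calc _ ≤ ({v.val - 1, v.val + 1} : Set ℕ).ncard :=
        Set.ncard_le_ncard_of_injOn _ hsub Fin.val_injective.injOn (Set.toFinite _)
    _ ≤ 2 := (Set.ncard_insert_le _ _).trans (by simp)

lemma isLinearForest_pathGraph (m : ℕ) : (pathGraph m).IsLinearForest :=
  ⟨isAcyclic_pathGraph m, ncard_neighborSet_pathGraph_le_two⟩

lemma IsLinearForest.comap {V W : Type*} [Finite W] {F : SimpleGraph V} {F' : SimpleGraph W}
    (f : F →g F') (hf : Function.Injective f) (h : F'.IsLinearForest) : F.IsLinearForest := by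
  refine ⟨h.1.comap f hf, fun v => ?_⟩
  calc (F.neighborSet v).ncard ≤ (F'.neighborSet (f v)).ncard :=
        Set.ncard_le_ncard_of_injOn f (fun _ hw => f.map_adj hw) hf.injOn
    _ ≤ 2 := h.2 (f v)

end SimpleGraph

lemma le_piLF {V : Type*} [Finite V] {F H : SimpleGraph V} (hle : F ≤ H)
    (hF : F.IsLinearForest) : F.edgeSet.ncard ≤ piLF H :=
  le_csSup ⟨Nat.card (Sym2 V), by rintro _ ⟨F', -, -, rfl⟩; exact Set.ncard_le_card _⟩
    ⟨F, hle, hF, rfl⟩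

lemma card_filter_range_succ_le_card_filter_and_add (N : ℕ) (P : ℕ → Prop) [DecidablePred P]
    (hN : ¬ P N) :
    #{i ∈ range (N + 1) | P i} ≤
      #{i ∈ range N | P i ∧ P (i + 1)} + #{i ∈ range (N + 1) | ¬ P i} := by
  set S := {i ∈ range (N + 1) | P i}
  have hstay : #{i ∈ S | P (i + 1)} ≤ #{i ∈ range N | P i ∧ P (i + 1)} := by
    refine card_le_card fun i hi => ?_
    simp only [S, mem_filter, mem_range] at hi ⊢
    refine ⟨?_, hi.1.2, hi.2⟩
    rcases Nat.lt_succ_iff_lt_or_eq.mp hi.1.1 with h | rfl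
    · exact h
    · exact absurd hi.1.2 hN
  have hleave : #{i ∈ S | ¬ P (i + 1)} ≤ #{i ∈ range (N + 1) | ¬ P i} := by
    refine card_le_card_of_injOn (· + 1) (fun i hi => ?_) (fun i _ j _ h => Nat.succ_injective h)
    simp only [S, coe_filter, mem_filter, mem_range, Set.mem_ofPred_eq] at hi ⊢
    refine ⟨?_, hi.2⟩
    rcases Nat.lt_succ_iff_lt_or_eq.mp hi.1.1 with h | rfl
    · omega
    · exact absurd hi.1.2 hN
  have := card_filter_add_card_filter_not (s := S) (p := fun i => P (i + 1))
  omega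

namespace SimpleGraph.Walk

section

variable {V : Type*} {G : SimpleGraph V} {x y : V} {p : G.Walk x y}

lemma IsPath.eq_of_sym2_getVert_eq (hp : p.IsPath) {i j : ℕ} (hi : i < p.length)
    (hj : j < p.length)
    (h : s(p.getVert i, p.getVert (i + 1)) = s(p.getVert j, p.getVert (j + 1))) : i = j := by
  have inj := hp.getVert_injOn
  rcases Sym2.eq_iff.mp h with ⟨h1, -⟩ | ⟨h1, h2⟩
  · exact inj (show i ≤ p.length by omega) (show j ≤ p.length by omega) h1
  · have := inj (show i ≤ p.length by omega) (show j + 1 ≤ p.length by omega) h1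
    have := inj (show i + 1 ≤ p.length by omega) (show j ≤ p.length by omega) h2
    omega

variable [DecidableEq V]

lemma IsHamiltonian.isLinearForest_spanningCoe_toSubgraph (hp : p.IsHamiltonian) :
    p.toSubgraph.spanningCoe.IsLinearForest :=
  let e := hp.isPath.pathGraphIsoToSubgraph.symm
  (isLinearForest_pathGraph _).comap
    ⟨fun v => e ⟨v, p.mem_verts_toSubgraph.mpr (hp.mem_support v)⟩,
      fun h => e.map_adj_iff.mpr h⟩
    (fun u v h => by simpa using e.injective h)

lemma IsHamiltonian.card_filter_getVert_mem (hp : p.IsHamiltonian) (s : Finset V) :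
    #{i ∈ range (p.length + 1) | p.getVert i ∈ s} = #s := by
  refine card_nbij p.getVert (fun i hi => (mem_filter.mp hi).2)
    (fun i hi j hj h => hp.isPath.getVert_injOn (mem_range_succ_iff.mp (mem_filter.mp hi).1)
      (mem_range_succ_iff.mp (mem_filter.mp hj).1) h) (fun v hv => ?_)
  obtain ⟨i, rfl, hi⟩ := mem_support_iff_exists_getVert.mp (hp.mem_support v)
  exact ⟨i, by simpa [Nat.lt_succ_iff] using ⟨hi, hv⟩, rfl⟩

variable [Fintype V]

lemma IsHamiltonian.card_le_card_filter_add_card_compl (hp : p.IsHamiltonian) (s : Finset V)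
    (hy : y ∉ s) :
    #s ≤ #{i ∈ range p.length | p.getVert i ∈ s ∧ p.getVert (i + 1) ∈ s} + #sᶜ := by
  have h := card_filter_range_succ_le_card_filter_and_add p.length (p.getVert · ∈ s)
    (by simpa using hy)
  have hc := hp.card_filter_getVert_mem sᶜ
  simp only [mem_compl] at hc
  rwa [hp.card_filter_getVert_mem s, hc] at h

end

section genLexProd

variable {m n : ℕ} {G : SimpleGraph (Fin m)} {H : Fin m → SimpleGraph (Fin n)}
  {x y : Fin m × Fin n} {p : (genLexProd G H).Walk x y}

lemma IsHamiltonian.card_filter_getVert_fst_eq_le_piLF (hp : p.IsHamiltonian) (c : Fin m) :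
    #{i ∈ range p.length | (p.getVert i).1 = c ∧ (p.getVert (i + 1)).1 = c} ≤ piLF (H c) := by
  set F := p.toSubgraph.spanningCoe.comap (Prod.mk c)
  have hFH : F ≤ H c := fun u v huv => by
    rcases p.toSubgraph.adj_sub huv with h | ⟨-, h⟩
    · exact absurd h (G.loopless.irrefl c)
    · exact h
  have hF : F.IsLinearForest :=
    let e := Embedding.comap (.sectR c (Fin n)) p.toSubgraph.spanningCoe
    hp.isLinearForest_spanningCoe_toSubgraph.comap e.toHom e.injective
  have hmk : ∀ v : Fin m × Fin n, v.1 = c → (c, v.2) = v := fun v h => Prod.ext h.symm rfl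
  refine le_trans ?_ (le_piLF hFH hF)
  rw [← Set.ncard_coe_finset]
  refine Set.ncard_le_ncard_of_injOn (fun i => s((p.getVert i).2, (p.getVert (i + 1)).2))
    (fun i hi => ?_) (fun i hi j hj h => ?_)
  · simp only [coe_filter, mem_range, Set.mem_ofPred_eq] at hi
    change p.toSubgraph.Adj (c, _) (c, _)
    rw [hmk _ hi.2.1, hmk _ hi.2.2]
    exact p.toSubgraph_adj_getVert hi.1
  · simp only [coe_filter, mem_range, Set.mem_ofPred_eq] at hi hj
    replace h := congrArg (Sym2.map (Prod.mk c)) h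
    simp only [Sym2.map_mk] at h
    rw [hmk _ hi.2.1, hmk _ hi.2.2, hmk _ hj.2.1, hmk _ hj.2.2] at h
    exact hp.isPath.eq_of_sym2_getVert_eq hi.1 hj.1 h


lemma IsHamiltonian.card_mul_le_sum_piLF_add (hp : p.IsHamiltonian) (E : Finset (Fin m))
    (hE : G.IsIndepSet E) (hy : y.1 ∉ E) :
    #E * n ≤ ∑ c ∈ E, piLF (H c) + #Eᶜ * n := by
  set D := fun c => {i ∈ range p.length | (p.getVert i).1 = c ∧ (p.getVert (i + 1)).1 = c}
  have key := hp.card_le_card_filter_add_card_compl (E ×ˢ univ) (by simpa using hy)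
  have hsub :
      {i ∈ range p.length | p.getVert i ∈ E ×ˢ univ ∧ p.getVert (i + 1) ∈ E ×ˢ univ} ⊆
        E.biUnion D := by
    intro i hi
    simp only [mem_filter, mem_range, mem_product, mem_univ, and_true] at hi
    rcases p.adj_getVert_succ hi.1 with h | ⟨h, -⟩
    · exact absurd h (hE hi.2.1 hi.2.2 h.ne)
    · exact mem_biUnion.mpr ⟨_, hi.2.1, mem_filter.mpr ⟨mem_range.mpr hi.1, rfl, h.symm⟩⟩
  calc #E * n ≤ #(E.biUnion D) + #Eᶜ * n := by
        simpa [card_compl, Nat.sub_mul] using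
          key.trans (Nat.add_le_add_right (card_le_card hsub) _)
    _ ≤ ∑ c ∈ E, piLF (H c) + #Eᶜ * n := by
        gcongr
        exact card_biUnion_le.trans
          (sum_le_sum fun c _ => hp.card_filter_getVert_fst_eq_le_piLF c)

end genLexProd

end SimpleGraph.Walk

/-- `evenIndex k i` is the vertex `u_{2i+1}` of `P_{2k+1}`, whose vertices are indexed from `0`. -/
def evenIndex (k : ℕ) : Fin (k + 1) ↪ Fin (2 * k + 1) :=
  ⟨fun i => ⟨2 * i, by omega⟩, fun i j h => Fin.ext (by simpa using h)⟩

@[simp]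
lemma evenIndex_val {k : ℕ} (i : Fin (k + 1)) : (evenIndex k i : ℕ) = 2 * i := rfl

theorem odd_path_hampath_odd_even (k n : ℕ) (b : ℕ)
    (hb1 : 1 ≤ b) (hbe : Even b)
    (H : Fin (2 * k + 1) → SimpleGraph (Fin n))
    (x y : Fin (2 * k + 1) × Fin n)
    (p : (genLexProd (pathGraph (2 * k + 1)) H).Walk x y) (hp : p.IsHamiltonian)
    (hy : (y.1 : ℕ) = b - 1) :
    n ≤ ∑ i : Fin (k + 1), piLF (H ⟨2 * i.1, by have := i.2; omega⟩) := by
  set E := univ.map (evenIndex k)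
  have hE : (pathGraph (2 * k + 1)).IsIndepSet E := by
    simp only [IsIndepSet, Set.Pairwise, E, coe_map, coe_univ, Set.image_univ, Set.mem_range,
      forall_exists_index, forall_apply_eq_imp_iff, pathGraph_adj, evenIndex_val]
    omega
  have hyE : y.1 ∉ E := by
    simp only [E, mem_map, mem_univ, true_and, not_exists, Fin.ext_iff, evenIndex_val]
    obtain ⟨r, hr⟩ := hbe
    omega
  have key := hp.card_mul_le_sum_piLF_add E hE hyE
  rw [card_compl, sum_map, card_map, card_univ, Fintype.card_fin, Fintype.card_fin] at key
  rw [show 2 * k + 1 - (k + 1) = k by omega, add_one_mul, add_comm (k * n)] at key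
  exact Nat.le_of_add_le_add_right key
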